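/- arXiv:1511.01383 — 6 statements merged into one kernel-verified Lean document; each statement's English description precedes it below -/
import Mathlib

section
/- Fix m, n ∈ ℕ. For every Boolean algebra with operators of relation type and every valuation of the variables x_0,…,x_{m−1} in it, the join of the values of all normal forms in F_n^m equals the top element ⊤. -/
/-- Relation-type terms over `m` variables. -/
inductive RTerm (m : ℕ) : Type
  | var : Fin m → RTerm m
  | zero : RTerm m
  | one : RTerm m
  | id : RTerm m
  | add : RTerm m → RTerm m → RTerm m
  | mul : RTerm m → RTerm m → RTerm m
  | neg : RTerm m → RTerm m
  | comp : RTerm m → RTerm m → RTerm m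
  | conv : RTerm m → RTerm m
  deriving DecidableEq

/-- The diversity term `0′ = 1 · −1′`. -/
def RTerm.div {m : ℕ} : RTerm m := .mul .one (.neg .id)

/-- The list `D_m = {1′, x_0, …, x_{m−1}}`. -/
def listD (m : ℕ) : List (RTerm m) :=
  RTerm.id :: List.ofFn (fun i : Fin m => RTerm.var i)

/-- Signed product `Y^α`, where the sign of `x ∈ Y` is positive iff `x ∈ S`
(the empty product is `1`). -/
def sprodBy {m : ℕ} (Y S : List (RTerm m)) : RTerm m :=
  (Y.map (fun x => if x ∈ S then x else RTerm.neg x)).foldr RTerm.mul RTerm.one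

/-- The one-step closure `CY = {x;y : x,y ∈ Y} ∪ {x˘ : x ∈ Y}`. -/
def listC {m : ℕ} (Y : List (RTerm m)) : List (RTerm m) :=
  (Y.flatMap fun x => Y.map fun y => RTerm.comp x y) ++ Y.map RTerm.conv

/-- The normal forms `F_n^m`: `F_0^m = {D_m^β}`,
`F_{n+1}^m = {D_m^β · (C F_n^m)^α}`. -/
def forms (m : ℕ) : ℕ → List (RTerm m)
  | 0 => (listD m).sublists.map (sprodBy (listD m))
  | n + 1 =>
      (listD m).sublists.flatMap fun S =>
        (listC (forms m n)).sublists.map fun T =>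
          RTerm.mul (sprodBy (listD m) S) (sprodBy (listC (forms m n)) T)

/-- A Boolean algebra with operators of relation type: a Boolean algebra with a
distinguished identity element, a binary composition and a unary converse that
are normal and additive in each argument. -/
structure RelBAO (B : Type*) [BooleanAlgebra B] where
  rid : B
  comp : B → B → B
  conv : B → B
  comp_bot_left : ∀ x, comp ⊥ x = ⊥
  comp_bot_right : ∀ x, comp x ⊥ = ⊥
  comp_sup_left : ∀ x y z, comp (x ⊔ y) z = comp x z ⊔ comp y z
  comp_sup_right : ∀ x y z, comp x (y ⊔ z) = comp x y ⊔ comp x z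
  conv_bot : conv ⊥ = ⊥
  conv_sup : ∀ x y, conv (x ⊔ y) = conv x ⊔ conv y

/-- Evaluation of a relation-type term in a Boolean algebra with operators. -/
def beval {B : Type*} [BooleanAlgebra B] (A : RelBAO B) {m : ℕ} (v : Fin m → B) :
    RTerm m → B
  | .var i => v i
  | .zero => ⊥
  | .one => ⊤
  | .id => A.rid
  | .add a b => beval A v a ⊔ beval A v b
  | .mul a b => beval A v a ⊓ beval A v b
  | .neg a => (beval A v a)ᶜ
  | .comp a b => A.comp (beval A v a) (beval A v b)
  | .conv a => A.conv (beval A v a)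

/-- Relativized interpretation of relation-type terms inside a unit `W ⊆ U × U`. -/
def rint {U : Type*} (W : Set (U × U)) {m : ℕ} (v : Fin m → Set (U × U)) :
    RTerm m → Set (U × U)
  | .var i => v i
  | .zero => ∅
  | .one => W
  | .id => {p | p ∈ W ∧ p.1 = p.2}
  | .add a b => rint W v a ∪ rint W v b
  | .mul a b => rint W v a ∩ rint W v b
  | .neg a => W \ rint W v a
  | .comp a b => {p | p ∈ W ∧ ∃ c, (p.1, c) ∈ rint W v a ∧ (c, p.2) ∈ rint W v b}
  | .conv a => {p | p ∈ W ∧ (p.2, p.1) ∈ rint W v a}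

/-- The two relation properties `R` (reflexive) and `S` (symmetric). -/
inductive RS | R | S
  deriving DecidableEq

/-- `W` is an `H`-relation: reflexive on its base if `R ∈ H`,
symmetric if `S ∈ H`. -/
def IsHRel (H : Set RS) {U : Type*} (W : Set (U × U)) : Prop :=
  (RS.R ∈ H → ∀ a b : U, (a, b) ∈ W → (a, a) ∈ W ∧ (b, b) ∈ W) ∧
  (RS.S ∈ H → ∀ a b : U, (a, b) ∈ W → (b, a) ∈ W)

/-- The equation `τ = σ` is `RRA_H`-valid. -/
def Valid (H : Set RS) {m : ℕ} (τ σ : RTerm m) : Prop :=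
  ∀ (U : Type) (W : Set (U × U)) (v : Fin m → Set (U × U)),
    IsHRel H W → (∀ i, v i ⊆ W) → rint W v τ = rint W v σ

/-- `[σ]` is an atom of the free algebra `Fr_m(RRA_H)`. -/
def IsAtomT (H : Set RS) {m : ℕ} (σ : RTerm m) : Prop :=
  ¬ Valid H σ .zero ∧
    ∀ ρ : RTerm m, Valid H (σ.mul ρ) .zero ∨ Valid H (σ.mul (.neg ρ)) .zero

/-- `e1 = 1′·−(0′;0′)`. -/
def termE1 {m : ℕ} : RTerm m := .mul .id (.neg (.comp .div .div))
/-- `e2 = 1′·(0′;0′)`. -/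
def termE2 {m : ℕ} : RTerm m := .mul .id (.comp .div .div)
/-- `m2 = 0′·−(0′;0′)`. -/
def termM2 {m : ℕ} : RTerm m := .mul .div (.neg (.comp .div .div))
/-- `m3 = 0′·(0′;0′)`. -/
def termM3 {m : ℕ} : RTerm m := .mul .div (.comp .div .div)
/-- `t = 0′·0′˘·((0′·0′˘);(0′·0′˘))`. -/
def termT {m : ℕ} : RTerm m :=
  .mul (.mul .div (.conv .div)) (.comp (.mul .div (.conv .div)) (.mul .div (.conv .div)))

section AuxForStmt0

variable {α : Type*} [DecidableEq α] {B : Type} [BooleanAlgebra B]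

/-- Product of signed values according to a total sign function. -/
def Qf (f : α → B) (g : α → Bool) : List α → B
  | [] => ⊤
  | x :: L => (if g x then f x else (f x)ᶜ) ⊓ Qf f g L

lemma Qf_append (f : α → B) (g : α → Bool) (L₁ L₂ : List α) :
    Qf f g (L₁ ++ L₂) = Qf f g L₁ ⊓ Qf f g L₂ := by
  induction L₁ with
  | nil => simp [Qf]
  | cons a L ih => simp [Qf, ih, inf_assoc]

lemma Qf_perturb (f : α → B) (g g' : α → Bool) (d : B) (L : List α)
    (h : ∀ x ∈ L, d ⊓ (if g x then f x else (f x)ᶜ) ≤ if g' x then f x else (f x)ᶜ) :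
    d ⊓ Qf f g L ≤ Qf f g' L := by
  induction L with
  | nil => simp [Qf]
  | cons a L ih =>
    simp only [Qf]
    refine le_inf ?_ ?_
    · exact le_trans (inf_le_inf_left d (inf_le_left)) (h a (by simp))
    · exact le_trans (inf_le_inf_left d (inf_le_right))
        (ih fun x hx => h x (by simp [hx]))

lemma Qf_top_le (f : α → B) (L : List α) (c : B)
    (h : ∀ g : α → Bool, Qf f g L ≤ c) : (⊤ : B) ≤ c := by
  induction L generalizing c with
  | nil => simpa [Qf] using h fun _ => true
  | cons a L ih =>
    have h1 : f a ≤ c := by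
      have key : (⊤ : B) ≤ (f a)ᶜ ⊔ c := by
        refine ih ((f a)ᶜ ⊔ c) fun g => ?_
        set g₁ : α → Bool := fun x => if x = a then true else g x with hg₁
        have hp : f a ⊓ Qf f g L ≤ Qf f g₁ L := by
          refine Qf_perturb f g g₁ (f a) L fun x hx => ?_
          by_cases hxa : x = a
          · subst hxa; simp [hg₁]
          · simp only [hg₁, hxa, if_false]; exact inf_le_right
        have hq : f a ⊓ Qf f g₁ L ≤ c := by
          have := h g₁
          simpa [Qf, hg₁] using this
        have : f a ⊓ Qf f g L ≤ c := by
          calc f a ⊓ Qf f g L = f a ⊓ (f a ⊓ Qf f g L) := by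
                rw [← inf_assoc, inf_idem]
            _ ≤ f a ⊓ Qf f g₁ L := inf_le_inf_left _ hp
            _ ≤ c := hq
        calc Qf f g L = ⊤ ⊓ Qf f g L := (top_inf_eq _).symm
          _ = (f a ⊔ (f a)ᶜ) ⊓ Qf f g L := by rw [sup_compl_eq_top]
          _ = f a ⊓ Qf f g L ⊔ (f a)ᶜ ⊓ Qf f g L := inf_sup_right _ _ _
          _ ≤ c ⊔ (f a)ᶜ := sup_le_sup this inf_le_left
          _ = (f a)ᶜ ⊔ c := sup_comm _ _
      calc f a = f a ⊓ ⊤ := (inf_top_eq _).symm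
        _ ≤ f a ⊓ ((f a)ᶜ ⊔ c) := inf_le_inf_left _ key
        _ = f a ⊓ (f a)ᶜ ⊔ f a ⊓ c := inf_sup_left _ _ _
        _ ≤ c := by simp
    have h2 : (f a)ᶜ ≤ c := by
      have key : (⊤ : B) ≤ f a ⊔ c := by
        refine ih (f a ⊔ c) fun g => ?_
        set g₀ : α → Bool := fun x => if x = a then false else g x with hg₀
        have hp : (f a)ᶜ ⊓ Qf f g L ≤ Qf f g₀ L := by
          refine Qf_perturb f g g₀ ((f a)ᶜ) L fun x hx => ?_
          by_cases hxa : x = a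
          · subst hxa; simp [hg₀]
          · simp only [hg₀, hxa, if_false]; exact inf_le_right
        have hq : (f a)ᶜ ⊓ Qf f g₀ L ≤ c := by
          have := h g₀
          simpa [Qf, hg₀] using this
        have : (f a)ᶜ ⊓ Qf f g L ≤ c := by
          calc (f a)ᶜ ⊓ Qf f g L = (f a)ᶜ ⊓ ((f a)ᶜ ⊓ Qf f g L) := by
                rw [← inf_assoc, inf_idem]
            _ ≤ (f a)ᶜ ⊓ Qf f g₀ L := inf_le_inf_left _ hp
            _ ≤ c := hq
        calc Qf f g L = ⊤ ⊓ Qf f g L := (top_inf_eq _).symm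
          _ = ((f a)ᶜ ⊔ f a) ⊓ Qf f g L := by rw [compl_sup_eq_top]
          _ = (f a)ᶜ ⊓ Qf f g L ⊔ f a ⊓ Qf f g L := inf_sup_right _ _ _
          _ ≤ c ⊔ f a := sup_le_sup this inf_le_left
          _ = f a ⊔ c := sup_comm _ _
      calc (f a)ᶜ = (f a)ᶜ ⊓ ⊤ := (inf_top_eq _).symm
        _ ≤ (f a)ᶜ ⊓ (f a ⊔ c) := inf_le_inf_left _ key
        _ = (f a)ᶜ ⊓ f a ⊔ (f a)ᶜ ⊓ c := inf_sup_left _ _ _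
        _ ≤ c := by simp
    calc (⊤ : B) = f a ⊔ (f a)ᶜ := (sup_compl_eq_top).symm
      _ ≤ c := sup_le h1 h2

lemma beval_sprodBy {B : Type} [BooleanAlgebra B] (A : RelBAO B) {m : ℕ}
    (v : Fin m → B) (Y S : List (RTerm m)) (g : RTerm m → Bool)
    (hg : ∀ x ∈ Y, (x ∈ S ↔ g x = true)) :
    beval A v (sprodBy Y S) = Qf (beval A v) g Y := by
  induction Y with
  | nil => simp [sprodBy, Qf, beval]
  | cons a Y ih =>
    have ha := hg a (by simp)
    have e : beval A v (sprodBy (a :: Y) S)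
        = beval A v (if a ∈ S then a else RTerm.neg a) ⊓ beval A v (sprodBy Y S) := by
      simp only [sprodBy, List.map_cons, List.foldr_cons]
      rfl
    rw [e, ih fun x hx => hg x (by simp [hx])]
    simp only [Qf]
    congr 1
    by_cases hs : a ∈ S
    · rw [if_pos hs, if_pos (ha.mp hs)]
    · rw [if_neg hs, if_neg (by simpa using fun hc => hs (ha.mpr hc))]
      rfl

end AuxForStmt0

/-- the join of the values of all normal forms in `F_n^m`
equals `⊤` in every Boolean algebra with operators of relation type. -/
theorem stmt_0 (m n : ℕ) (B : Type) [BooleanAlgebra B] (A : RelBAO B)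
    (v : Fin m → B) :
    (forms m n).toFinset.sup (beval A v) = ⊤ := by
  rw [eq_top_iff]
  cases n with
  | zero =>
    refine Qf_top_le (beval A v) (listD m) _ fun g => ?_
    have hmem : sprodBy (listD m) ((listD m).filter g) ∈ forms m 0 := by
      simp only [forms, List.mem_map]
      exact ⟨_, List.mem_sublists.mpr ((listD m).filter_sublist), rfl⟩
    have hle := Finset.le_sup (f := beval A v) (List.mem_toFinset.mpr hmem)
    refine le_trans (le_of_eq ?_) hle
    exact (beval_sprodBy A v _ _ g fun x hx => by simp [List.mem_filter, hx]).symm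
  | succ n =>
    refine Qf_top_le (beval A v) (listD m ++ listC (forms m n)) _ fun g => ?_
    rw [Qf_append]
    set S := (listD m).filter g with hS
    set T := (listC (forms m n)).filter g with hT
    have hmem : RTerm.mul (sprodBy (listD m) S) (sprodBy (listC (forms m n)) T)
        ∈ forms m (n + 1) := by
      simp only [forms, List.mem_flatMap, List.mem_map]
      exact ⟨S, List.mem_sublists.mpr ((listD m).filter_sublist),
        T, List.mem_sublists.mpr ((listC (forms m n)).filter_sublist), rfl⟩
    have hle := Finset.le_sup (f := beval A v) (List.mem_toFinset.mpr hmem)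
    refine le_trans (le_of_eq ?_) hle
    have e1 := beval_sprodBy A v (listD m) S g
      (fun x hx => by simp [hS, List.mem_filter, hx])
    have e2 := beval_sprodBy A v (listC (forms m n)) T g
      (fun x hx => by simp [hT, List.mem_filter, hx])
    show Qf (beval A v) g (listD m) ⊓ Qf (beval A v) g (listC (forms m n))
        = beval A v (RTerm.mul (sprodBy (listD m) S) (sprodBy (listC (forms m n)) T))
    rw [← e1, ← e2]
    rfl
end

section
/- Fix m, n ∈ ℕ. For every Boolean algebra with operators of relation type, every valuation of the variables x_0,…,x_{m−1} in it, and every pair of distinct normal forms τ, σ ∈ F_n^m, the meet of the values of τ and σ equals ⊥. -/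
lemma sprodBy_cons {m : ℕ} (a : RTerm m) (Y S : List (RTerm m)) :
    sprodBy (a :: Y) S = RTerm.mul (if a ∈ S then a else .neg a) (sprodBy Y S) := rfl

lemma sprodBy_le {B : Type} [BooleanAlgebra B] (A : RelBAO B) {m : ℕ} (v : Fin m → B)
    (Y S : List (RTerm m)) {x : RTerm m} (hx : x ∈ Y) :
    beval A v (sprodBy Y S) ≤ beval A v (if x ∈ S then x else .neg x) := by
  induction Y with
  | nil => simp at hx
  | cons a Y ih =>
    rw [sprodBy_cons]
    rcases List.mem_cons.1 hx with h | h
    · subst h; exact inf_le_left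
    · exact le_trans inf_le_right (ih h)

lemma sprodBy_congr {m : ℕ} (Y S S' : List (RTerm m))
    (h : ∀ x ∈ Y, (x ∈ S ↔ x ∈ S')) : sprodBy Y S = sprodBy Y S' := by
  unfold sprodBy
  congr 1
  exact List.map_congr_left fun x hx => by
    by_cases hS : x ∈ S
    · rw [if_pos hS, if_pos ((h x hx).1 hS)]
    · rw [if_neg hS, if_neg (fun h' => hS ((h x hx).2 h'))]

lemma sprod_disjoint {B : Type} [BooleanAlgebra B] (A : RelBAO B) {m : ℕ} (v : Fin m → B)
    (Y S S' : List (RTerm m)) (h : sprodBy Y S ≠ sprodBy Y S') :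
    beval A v (sprodBy Y S) ⊓ beval A v (sprodBy Y S') = ⊥ := by
  by_cases hall : ∀ x ∈ Y, (x ∈ S ↔ x ∈ S')
  · exact absurd (sprodBy_congr Y S S' hall) h
  · push_neg at hall
    obtain ⟨x, hx, hne⟩ := hall
    have h1 := sprodBy_le A v Y S hx
    have h2 := sprodBy_le A v Y S' hx
    refine le_bot_iff.1 ?_
    rcases hne with ⟨hS, hS'⟩ | ⟨hS, hS'⟩
    · rw [if_pos hS] at h1; rw [if_neg hS'] at h2
      calc beval A v (sprodBy Y S) ⊓ beval A v (sprodBy Y S')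
          ≤ beval A v x ⊓ (beval A v x)ᶜ := inf_le_inf h1 h2
        _ = ⊥ := inf_compl_eq_bot
    · rw [if_neg hS] at h1; rw [if_pos hS'] at h2
      calc beval A v (sprodBy Y S) ⊓ beval A v (sprodBy Y S')
          ≤ (beval A v x)ᶜ ⊓ beval A v x := inf_le_inf h1 h2
        _ = ⊥ := compl_inf_eq_bot

/-- distinct normal forms of the same degree have meet `⊥`
in every Boolean algebra with operators of relation type. -/
theorem stmt_1 (m n : ℕ) (B : Type) [BooleanAlgebra B] (A : RelBAO B)
    (v : Fin m → B) (τ σ : RTerm m) (hτ : τ ∈ forms m n) (hσ : σ ∈ forms m n)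
    (hne : τ ≠ σ) :
    beval A v τ ⊓ beval A v σ = ⊥ := by
  cases n with
  | zero =>
    simp only [forms, List.mem_map] at hτ hσ
    obtain ⟨S, -, rfl⟩ := hτ
    obtain ⟨S', -, rfl⟩ := hσ
    exact sprod_disjoint A v _ S S' hne
  | succ n =>
    simp only [forms, List.mem_flatMap, List.mem_map] at hτ hσ
    obtain ⟨S, -, T, -, rfl⟩ := hτ
    obtain ⟨S', -, T', -, rfl⟩ := hσ
    have : sprodBy (listD m) S ≠ sprodBy (listD m) S' ∨
        sprodBy (listC (forms m n)) T ≠ sprodBy (listC (forms m n)) T' := by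
      by_contra h
      push_neg at h
      exact hne (by rw [h.1, h.2])
    refine le_bot_iff.1 ?_
    rcases this with h | h
    · calc beval A v _ ⊓ beval A v _
          ≤ beval A v (sprodBy (listD m) S) ⊓ beval A v (sprodBy (listD m) S') :=
            inf_le_inf inf_le_left inf_le_left
        _ = ⊥ := sprod_disjoint A v _ S S' h
    · calc beval A v _ ⊓ beval A v _
          ≤ beval A v (sprodBy (listC (forms m n)) T) ⊓
              beval A v (sprodBy (listC (forms m n)) T') :=
            inf_le_inf inf_le_right inf_le_right
        _ = ⊥ := sprod_disjoint A v _ T T' h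
end

section
/- Fix m, n ∈ ℕ. For every normal form τ ∈ F_n^m there exists a finite set S ⊆ F_{n+1}^m such that in every Boolean algebra with operators of relation type, under every valuation of the variables x_0,…,x_{m−1}, the value of τ equals the join of the values of the elements of S. -/
section Aux

variable {B : Type} [BooleanAlgebra B]

lemma beval_sprodBy_s2 (A : RelBAO B) {m : ℕ} (v : Fin m → B) (L S : List (RTerm m)) :
    beval A v (sprodBy L S) =
      L.toFinset.inf (fun x => if x ∈ S then beval A v x else (beval A v x)ᶜ) := by
  induction L with
  | nil => simp [sprodBy, beval]
  | cons a L ih =>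
    have h : beval A v (sprodBy (a :: L) S)
        = beval A v (if a ∈ S then a else RTerm.neg a) ⊓ beval A v (sprodBy L S) := rfl
    rw [h, ih, List.toFinset_cons, Finset.inf_insert]
    by_cases hc : a ∈ S <;> simp [hc, beval]

lemma powerset_partition {γ : Type} [DecidableEq γ] (e : γ → B) (F : Finset γ) :
    F.powerset.sup (fun A => F.inf fun x => if x ∈ A then e x else (e x)ᶜ) = ⊤ := by
  induction F using Finset.induction_on with
  | empty => simp
  | @insert a F ha ih =>
    rw [Finset.powerset_insert, Finset.sup_union, Finset.sup_image]
    have h1 : (F.powerset.sup fun A => (insert a F).inf fun x => if x ∈ A then e x else (e x)ᶜ)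
        = (e a)ᶜ ⊓ ⊤ := by
      rw [← ih, Finset.sup_inf_distrib_left]
      apply Finset.sup_congr rfl
      intro A hA
      have haA : a ∉ A := fun h => ha (Finset.mem_powerset.mp hA h)
      rw [Finset.inf_insert, if_neg haA]
    have h2 : (F.powerset.sup ((fun A => (insert a F).inf fun x => if x ∈ A then e x else (e x)ᶜ)
          ∘ insert a)) = e a ⊓ ⊤ := by
      rw [← ih, Finset.sup_inf_distrib_left]
      apply Finset.sup_congr rfl
      intro A hA
      simp only [Function.comp]
      rw [Finset.inf_insert, if_pos (Finset.mem_insert_self a A)]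
      congr 1
      apply Finset.inf_congr rfl
      intro x hx
      have : x ≠ a := fun h => ha (h ▸ hx)
      simp [Finset.mem_insert, this]
    rw [h1, h2]
    simp

lemma sublists_partition (A : RelBAO B) {m : ℕ} (v : Fin m → B) (L : List (RTerm m)) :
    L.sublists.toFinset.sup (fun T => beval A v (sprodBy L T)) = ⊤ := by
  classical
  apply le_antisymm le_top
  rw [← powerset_partition (beval A v) L.toFinset]
  apply Finset.sup_le
  intro A0 hA0
  have hT : L.filter (· ∈ A0) ∈ L.sublists.toFinset := by
    simp [List.mem_sublists, List.filter_sublist]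
  refine le_trans (le_of_eq ?_) (Finset.le_sup hT)
  rw [beval_sprodBy_s2]
  apply Finset.inf_congr rfl
  intro x hx
  have hxL : x ∈ L := List.mem_toFinset.mp hx
  by_cases h : x ∈ A0 <;> simp [h, List.mem_filter, hxL]

end Aux
section Aux2

variable {B : Type} [BooleanAlgebra B]

lemma comp_finsup_left (A : RelBAO B) {γ : Type} (s : Finset γ) (f : γ → B) (b : B) :
    A.comp (s.sup f) b = s.sup fun u => A.comp (f u) b := by
  induction s using Finset.cons_induction with
  | empty => simp [A.comp_bot_left]
  | cons a s ha ih => rw [Finset.sup_cons, A.comp_sup_left, ih, Finset.sup_cons]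

lemma comp_finsup_right (A : RelBAO B) {γ : Type} (s : Finset γ) (f : γ → B) (b : B) :
    A.comp b (s.sup f) = s.sup fun u => A.comp b (f u) := by
  induction s using Finset.cons_induction with
  | empty => simp [A.comp_bot_right]
  | cons a s ha ih => rw [Finset.sup_cons, A.comp_sup_right, ih, Finset.sup_cons]

lemma conv_finsup (A : RelBAO B) {γ : Type} (s : Finset γ) (f : γ → B) :
    A.conv (s.sup f) = s.sup fun u => A.conv (f u) := by
  induction s using Finset.cons_induction with
  | empty => simp [A.conv_bot]
  | cons a s ha ih => rw [Finset.sup_cons, A.conv_sup, ih, Finset.sup_cons]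

/-- Refinements of a one-step-closure term. -/
def refSet {m : ℕ} (r : RTerm m → Finset (RTerm m)) : RTerm m → Finset (RTerm m)
  | .comp u w => (r u ×ˢ r w).image fun p => RTerm.comp p.1 p.2
  | .conv u => (r u).image RTerm.conv
  | _ => ∅

lemma mem_listC_iff {m : ℕ} {L : List (RTerm m)} {x : RTerm m} :
    x ∈ listC L ↔ (∃ u ∈ L, ∃ w ∈ L, x = RTerm.comp u w) ∨ ∃ u ∈ L, x = RTerm.conv u := by
  simp [listC, List.mem_append, List.mem_flatMap, List.mem_map, eq_comm]

lemma refSet_mem {m n : ℕ} (r : RTerm m → Finset (RTerm m))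
    (hr1 : ∀ u ∈ forms m n, ∀ σ ∈ r u, σ ∈ forms m (n + 1))
    {x : RTerm m} (hx : x ∈ listC (forms m n)) :
    ∀ y ∈ refSet r x, y ∈ listC (forms m (n + 1)) := by
  rcases mem_listC_iff.mp hx with ⟨u, hu, w, hw, rfl⟩ | ⟨u, hu, rfl⟩
  · intro y hy
    simp only [refSet, Finset.mem_image, Finset.mem_product] at hy
    obtain ⟨⟨a, b⟩, ⟨ha, hb⟩, rfl⟩ := hy
    exact mem_listC_iff.mpr (Or.inl ⟨a, hr1 u hu a ha, b, hr1 w hw b hb, rfl⟩)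
  · intro y hy
    simp only [refSet, Finset.mem_image] at hy
    obtain ⟨a, ha, rfl⟩ := hy
    exact mem_listC_iff.mpr (Or.inr ⟨a, hr1 u hu a ha, rfl⟩)

lemma refSet_val {m n : ℕ} (r : RTerm m → Finset (RTerm m))
    (A : RelBAO B) (v : Fin m → B)
    (hr2 : ∀ u ∈ forms m n, ∀ (B : Type) [BooleanAlgebra B] (A : RelBAO B) (v : Fin m → B),
        beval A v u = (r u).sup (beval A v))
    {x : RTerm m} (hx : x ∈ listC (forms m n)) :
    beval A v x = (refSet r x).sup (beval A v) := by
  rcases mem_listC_iff.mp hx with ⟨u, hu, w, hw, rfl⟩ | ⟨u, hu, rfl⟩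
  · show A.comp (beval A v u) (beval A v w) = _
    rw [hr2 u hu B A v, hr2 w hw B A v, comp_finsup_left, refSet, Finset.sup_image,
      Finset.sup_product_left]
    apply Finset.sup_congr rfl
    intro a _
    rw [comp_finsup_right]
    rfl
  · show A.conv (beval A v u) = _
    rw [hr2 u hu B A v, conv_finsup, refSet, Finset.sup_image]
    rfl

end Aux2
lemma base_lemma {m : ℕ} (S0 : List (RTerm m)) (hS0 : S0 ∈ (listD m).sublists) :
    ∃ S : Finset (RTerm m), (∀ σ ∈ S, σ ∈ forms m 1) ∧
      ∀ (B : Type) [BooleanAlgebra B] (A : RelBAO B) (v : Fin m → B),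
        beval A v (sprodBy (listD m) S0) = S.sup (beval A v) := by
  classical
  refine ⟨(listC (forms m 0)).sublists.toFinset.image
      (fun T => RTerm.mul (sprodBy (listD m) S0) (sprodBy (listC (forms m 0)) T)), ?_, ?_⟩
  · intro σ hσ
    simp only [Finset.mem_image, List.mem_toFinset] at hσ
    obtain ⟨T, hT, rfl⟩ := hσ
    show _ ∈ forms m (0 + 1)
    simp only [forms, List.mem_flatMap, List.mem_map]
    exact ⟨S0, hS0, T, hT, rfl⟩
  · intro B _ A v
    rw [Finset.sup_image]
    have h : ((listC (forms m 0)).sublists.toFinset.sup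
          ((beval A v) ∘ fun T => RTerm.mul (sprodBy (listD m) S0) (sprodBy (listC (forms m 0)) T)))
        = beval A v (sprodBy (listD m) S0) ⊓
            (listC (forms m 0)).sublists.toFinset.sup (fun T => beval A v (sprodBy (listC (forms m 0)) T)) := by
      rw [Finset.sup_inf_distrib_left]
      exact Finset.sup_congr rfl (fun T _ => rfl)
    rw [h, sublists_partition, inf_top_eq]
lemma step_lemma {m n : ℕ} (r : RTerm m → Finset (RTerm m))
    (hr1 : ∀ u ∈ forms m n, ∀ σ ∈ r u, σ ∈ forms m (n + 1))
    (hr2 : ∀ u ∈ forms m n, ∀ (B : Type) [BooleanAlgebra B] (A : RelBAO B) (v : Fin m → B),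
        beval A v u = (r u).sup (beval A v))
    (S0 T0 : List (RTerm m)) (hS0 : S0 ∈ (listD m).sublists) :
    ∃ S : Finset (RTerm m), (∀ σ ∈ S, σ ∈ forms m (n + 2)) ∧
      ∀ (B : Type) [BooleanAlgebra B] (A : RelBAO B) (v : Fin m → B),
        beval A v (RTerm.mul (sprodBy (listD m) S0) (sprodBy (listC (forms m n)) T0))
          = S.sup (beval A v) := by
  classical
  set Cn := listC (forms m n) with hCn
  set C' := listC (forms m (n + 1)) with hC'
  set Good : List (RTerm m) → Prop := fun T =>
    ∀ x ∈ Cn, (x ∈ T0 → ∃ y ∈ refSet r x, y ∈ T) ∧ (x ∉ T0 → ∀ y ∈ refSet r x, y ∉ T)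
    with hGood
  refine ⟨(C'.sublists.toFinset.filter Good).image
      (fun T => RTerm.mul (sprodBy (listD m) S0) (sprodBy C' T)), ?_, ?_⟩
  · intro σ hσ
    simp only [Finset.mem_image, Finset.mem_filter, List.mem_toFinset] at hσ
    obtain ⟨T, ⟨hT, -⟩, rfl⟩ := hσ
    show _ ∈ forms m (n + 1 + 1)
    simp only [forms, List.mem_flatMap, List.mem_map]
    exact ⟨S0, hS0, T, hT, rfl⟩
  · intro B _ A v
    have qpos : ∀ (T : List (RTerm m)) (y : RTerm m), y ∈ C' → y ∈ T →
        beval A v (sprodBy C' T) ≤ beval A v y := by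
      intro T y hyC hyT
      rw [beval_sprodBy_s2]
      have := Finset.inf_le (f := fun x => if x ∈ T then beval A v x else (beval A v x)ᶜ)
        (List.mem_toFinset.mpr hyC)
      simpa [hyT] using this
    have qneg : ∀ (T : List (RTerm m)) (y : RTerm m), y ∈ C' → y ∉ T →
        beval A v (sprodBy C' T) ≤ (beval A v y)ᶜ := by
      intro T y hyC hyT
      rw [beval_sprodBy_s2]
      have := Finset.inf_le (f := fun x => if x ∈ T then beval A v x else (beval A v x)ᶜ)
        (List.mem_toFinset.mpr hyC)
      simpa [hyT] using this
    have ppos : ∀ x ∈ Cn, x ∈ T0 → beval A v (sprodBy Cn T0) ≤ beval A v x := by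
      intro x hxC hx0
      rw [beval_sprodBy_s2]
      have := Finset.inf_le (f := fun z => if z ∈ T0 then beval A v z else (beval A v z)ᶜ)
        (List.mem_toFinset.mpr hxC)
      simpa [hx0] using this
    have pneg : ∀ x ∈ Cn, x ∉ T0 → beval A v (sprodBy Cn T0) ≤ (beval A v x)ᶜ := by
      intro x hxC hx0
      rw [beval_sprodBy_s2]
      have := Finset.inf_le (f := fun z => if z ∈ T0 then beval A v z else (beval A v z)ᶜ)
        (List.mem_toFinset.mpr hxC)
      simpa [hx0] using this
    have qlex : ∀ (T : List (RTerm m)), ∀ x ∈ Cn, (∃ y ∈ refSet r x, y ∈ T) →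
        beval A v (sprodBy C' T) ≤ beval A v x := by
      intro T x hxC ⟨y, hy, hyT⟩
      refine le_trans (qpos T y (refSet_mem r hr1 hxC y hy) hyT) ?_
      rw [refSet_val r A v hr2 hxC]
      exact Finset.le_sup hy
    have qlenx : ∀ (T : List (RTerm m)), ∀ x ∈ Cn, (∀ y ∈ refSet r x, y ∉ T) →
        beval A v (sprodBy C' T) ≤ (beval A v x)ᶜ := by
      intro T x hxC hall
      rw [refSet_val r A v hr2 hxC]
      apply le_compl_comm.mp
      apply Finset.sup_le
      intro y hy
      exact le_compl_comm.mp (qneg T y (refSet_mem r hr1 hxC y hy) (hall y hy))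
    have key1 : ∀ T : List (RTerm m), Good T →
        beval A v (sprodBy C' T) ≤ beval A v (sprodBy Cn T0) := by
      intro T hG
      conv_rhs => rw [beval_sprodBy_s2]
      apply Finset.le_inf
      intro x hx
      have hxC : x ∈ Cn := List.mem_toFinset.mp hx
      by_cases hx0 : x ∈ T0
      · rw [if_pos hx0]
        exact qlex T x hxC ((hG x hxC).1 hx0)
      · rw [if_neg hx0]
        exact qlenx T x hxC ((hG x hxC).2 hx0)
    have key2 : ∀ T : List (RTerm m), ¬ Good T →
        beval A v (sprodBy Cn T0) ⊓ beval A v (sprodBy C' T) ≤ ⊥ := by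
      intro T hG
      have hG' : ∃ x, x ∈ Cn ∧
          ¬ ((x ∈ T0 → ∃ y ∈ refSet r x, y ∈ T) ∧ (x ∉ T0 → ∀ y ∈ refSet r x, y ∉ T)) := by
        by_contra hno
        push_neg at hno
        exact hG hno
      obtain ⟨x, hxC, hbad⟩ := hG'
      by_cases hx0 : x ∈ T0
      · have hall : ∀ y ∈ refSet r x, y ∉ T := by
          by_contra hex
          push_neg at hex
          exact hbad ⟨fun _ => hex, fun hx0' => absurd hx0 hx0'⟩
        calc beval A v (sprodBy Cn T0) ⊓ beval A v (sprodBy C' T)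
            ≤ beval A v x ⊓ (beval A v x)ᶜ :=
              inf_le_inf (ppos x hxC hx0) (qlenx T x hxC hall)
          _ = ⊥ := inf_compl_eq_bot
      · have hex : ∃ y ∈ refSet r x, y ∈ T := by
          by_contra hall
          push_neg at hall
          exact hbad ⟨fun h => absurd h hx0, fun _ => hall⟩
        calc beval A v (sprodBy Cn T0) ⊓ beval A v (sprodBy C' T)
            ≤ (beval A v x)ᶜ ⊓ beval A v x :=
              inf_le_inf (pneg x hxC hx0) (qlex T x hxC hex)
          _ = ⊥ := compl_inf_eq_bot
    show beval A v (sprodBy (listD m) S0) ⊓ beval A v (sprodBy Cn T0) = _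
    rw [Finset.sup_image]
    apply le_antisymm
    · have htop := sublists_partition A v C'
      calc beval A v (sprodBy (listD m) S0) ⊓ beval A v (sprodBy Cn T0)
          = (beval A v (sprodBy (listD m) S0) ⊓ beval A v (sprodBy Cn T0)) ⊓
              C'.sublists.toFinset.sup (fun T => beval A v (sprodBy C' T)) := by
            rw [htop, inf_top_eq]
        _ = C'.sublists.toFinset.sup
              (fun T => (beval A v (sprodBy (listD m) S0) ⊓ beval A v (sprodBy Cn T0)) ⊓
                beval A v (sprodBy C' T)) := by
            rw [Finset.sup_inf_distrib_left]
        _ ≤ _ := by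
            apply Finset.sup_le
            intro T hT
            by_cases hG : Good T
            · have hmem : T ∈ C'.sublists.toFinset.filter Good := Finset.mem_filter.mpr ⟨hT, hG⟩
              refine le_trans ?_ (Finset.le_sup (f := (beval A v) ∘ fun T =>
                RTerm.mul (sprodBy (listD m) S0) (sprodBy C' T)) hmem)
              show _ ≤ beval A v (sprodBy (listD m) S0) ⊓ beval A v (sprodBy C' T)
              exact inf_le_inf inf_le_left le_rfl
            · refine le_trans ?_ bot_le
              calc (beval A v (sprodBy (listD m) S0) ⊓ beval A v (sprodBy Cn T0)) ⊓
                    beval A v (sprodBy C' T)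
                  ≤ beval A v (sprodBy Cn T0) ⊓ beval A v (sprodBy C' T) :=
                    inf_le_inf inf_le_right le_rfl
                _ ≤ ⊥ := key2 T hG
    · apply Finset.sup_le
      intro T hT
      obtain ⟨-, hG⟩ := Finset.mem_filter.mp hT
      show beval A v (sprodBy (listD m) S0) ⊓ beval A v (sprodBy C' T) ≤ _
      exact inf_le_inf le_rfl (key1 T hG)
/-- every normal form of degree `n` equals a join of normal forms
of degree `n+1`, in every Boolean algebra with operators of relation type. -/
theorem stmt_2 (m n : ℕ) (τ : RTerm m) (hτ : τ ∈ forms m n) :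
    ∃ S : Finset (RTerm m), (∀ σ ∈ S, σ ∈ forms m (n + 1)) ∧
      ∀ (B : Type) [BooleanAlgebra B] (A : RelBAO B) (v : Fin m → B),
        beval A v τ = S.sup (beval A v) := by
  induction n generalizing τ with
  | zero =>
    obtain ⟨S0, hS0, rfl⟩ : ∃ S0 ∈ (listD m).sublists, sprodBy (listD m) S0 = τ := by
      simpa only [forms, List.mem_map] using hτ
    exact base_lemma S0 hS0
  | succ n ih =>
    choose! r hr1 hr2 using ih
    obtain ⟨S0, hS0, T0, hT0, rfl⟩ :
        ∃ S0 ∈ (listD m).sublists, ∃ T0 ∈ (listC (forms m n)).sublists,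
          RTerm.mul (sprodBy (listD m) S0) (sprodBy (listC (forms m n)) T0) = τ := by
      simpa only [forms, List.mem_flatMap, List.mem_map] using hτ
    exact step_lemma r hr1 hr2 S0 T0 hS0
end

section
/- Fix m ∈ ℕ. For every relation-type term τ over m variables there exist k ∈ ℕ and a finite set S ⊆ F_k^m of normal forms of degree k such that in every Boolean algebra with operators of relation type, under every valuation of the variables x_0,…,x_{m−1}, the value of τ equals the join of the values of the elements of S. -/
/-!
Let `G₀ = D_m` and `G_{k+1} = D_m ∪ C F_k`, so that `F_k` is the set of sign products over
`G_k`. The sign products over `G_k` join to `⊤`, and each of them lies below or is disjoint from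
every generator, hence from every Boolean combination `ρ` of `G_k`, according to the truth value
of `ρ` at its signs; so `ρ` is the join of the elements of `F_k` at which it is true. Since `;`
and `˘` are additive, the composition or converse of such joins is a join of elements of
`C F_k ⊆ G_{k+1}`.
This lets every term be brought, by induction, to a Boolean combination of some `G_k`; in
particular, each element of `F_k` is one of `G_{k+1}` as well, which is what allows the two
arguments of a composition to be taken at a common level.
-/

section BooleanAlgebra

variable {B : Type*} [BooleanAlgebra B]

theorem eq_sup_filter_of_inf_eq_ite {ι : Type*} {I : Finset ι} {a : ι → B}
    (hcover : I.sup a = ⊤) {P : ι → Prop} [DecidablePred P] {x : B}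
    (h : ∀ i ∈ I, x ⊓ a i = if P i then a i else ⊥) :
    x = (I.filter P).sup a :=
  calc x = x ⊓ I.sup a := by rw [hcover, inf_top_eq]
    _ = I.sup fun i => if P i then a i else ⊥ := by
      rw [Finset.sup_inf_distrib_left]; exact Finset.sup_congr rfl h
    _ = (I.filter P).sup a := by rw [Finset.sup_ite, Finset.sup_bot, sup_bot_eq]

def RelBAO.compLeftHom (A : RelBAO B) (y : B) : SupBotHom B B where
  toFun x := A.comp x y
  map_sup' x z := A.comp_sup_left x z y
  map_bot' := A.comp_bot_left y

def RelBAO.compRightHom (A : RelBAO B) (x : B) : SupBotHom B B where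
  toFun y := A.comp x y
  map_sup' := A.comp_sup_right x
  map_bot' := A.comp_bot_right x

def RelBAO.convHom (A : RelBAO B) : SupBotHom B B where
  toFun := A.conv
  map_sup' := A.conv_sup
  map_bot' := A.conv_bot

theorem RelBAO.comp_finset_sup {ι κ : Type*} (A : RelBAO B) (s : Finset ι) (t : Finset κ)
    (f : ι → B) (g : κ → B) :
    A.comp (s.sup f) (t.sup g) = (s ×ˢ t).sup fun p => A.comp (f p.1) (g p.2) := by
  rw [Finset.sup_product_left]
  refine (map_finset_sup (A.compLeftHom (t.sup g)) s f).trans (Finset.sup_congr rfl fun i _ => ?_)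
  exact map_finset_sup (A.compRightHom (f i)) t g

theorem RelBAO.conv_finset_sup {ι : Type*} (A : RelBAO B) (s : Finset ι) (f : ι → B) :
    A.conv (s.sup f) = s.sup fun i => A.conv (f i) :=
  map_finset_sup A.convHom s f

end BooleanAlgebra

namespace RTerm

variable {m : ℕ} {B : Type*} [BooleanAlgebra B] (A : RelBAO B) (v : Fin m → B)

/-- Only subterms whose head is not a Boolean operation count as members of `Y`: a term of
`Y` of the form `a + b` is a Boolean combination of `Y` only if `a` and `b` are. -/
def IsBoolComb (Y : List (RTerm m)) : RTerm m → Prop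
  | zero | one => True
  | add a b | mul a b => IsBoolComb Y a ∧ IsBoolComb Y b
  | neg a => IsBoolComb Y a
  | t => t ∈ Y

def boolEval (p : RTerm m → Bool) : RTerm m → Bool
  | zero => false
  | one => true
  | add a b => boolEval p a || boolEval p b
  | mul a b => boolEval p a && boolEval p b
  | neg a => !boolEval p a
  | t => p t

/-- If each generator either contains `b` or is disjoint from it, as prescribed by `p`, then
so does every Boolean combination `ρ`, as prescribed by the truth value of `ρ` under `p`. -/
theorem beval_inf_eq_ite {Y : List (RTerm m)} (p : RTerm m → Bool) {b : B}
    (hY : ∀ y ∈ Y, beval A v y ⊓ b = if p y then b else ⊥) {ρ : RTerm m}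
    (hρ : IsBoolComb Y ρ) : beval A v ρ ⊓ b = if boolEval p ρ then b else ⊥ := by
  induction ρ with
  | zero => simp [beval, boolEval]
  | one => simp [beval, boolEval]
  | var _ | id | comp _ _ | conv _ => exact hY _ hρ
  | add x y ihx ihy =>
    simp only [beval, boolEval, inf_sup_right, ihx hρ.1, ihy hρ.2]
    split_ifs <;> simp_all
  | mul x y ihx ihy =>
    simp only [beval, boolEval, inf_inf_distrib_right, ihx hρ.1, ihy hρ.2]
    split_ifs <;> simp_all
  | neg x ihx =>
    rw [beval, inf_comm, ← sdiff_eq, ← sdiff_inf_self_left, inf_comm, ihx hρ, boolEval]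
    cases boolEval p x <;> simp

theorem beval_eq_sup_filter {ι : Type*} {I : Finset ι} {a : ι → B} (hcover : I.sup a = ⊤)
    {Y : List (RTerm m)} (sign : ι → RTerm m → Bool)
    (hY : ∀ i ∈ I, ∀ y ∈ Y, beval A v y ⊓ a i = if sign i y then a i else ⊥)
    {ρ : RTerm m} (hρ : IsBoolComb Y ρ) :
    beval A v ρ = (I.filter fun i => boolEval (sign i) ρ).sup a :=
  eq_sup_filter_of_inf_eq_ite hcover fun i hi => beval_inf_eq_ite A v (sign i) (hY i hi) hρ

theorem isBoolComb_sprodBy {Y Z : List (RTerm m)} (S : List (RTerm m))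
    (hZ : ∀ z ∈ Z, IsBoolComb Y z) : IsBoolComb Y (sprodBy Z S) := by
  induction Z with
  | nil => trivial
  | cons z Z ih =>
    refine ⟨?_, ih fun x hx => hZ x (List.mem_cons_of_mem z hx)⟩
    dsimp only
    split <;> exact hZ z List.mem_cons_self

theorem beval_sprodBy (Y S : List (RTerm m)) :
    beval A v (sprodBy Y S) =
      Y.toFinset.inf fun y => if y ∈ S then beval A v y else (beval A v y)ᶜ := by
  induction Y with
  | nil => rfl
  | cons y Y ih =>
    rw [List.toFinset_cons, Finset.inf_insert, ← ih]
    by_cases hy : y ∈ S <;> simp [sprodBy, beval, hy]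

theorem beval_inf_sprodBy {Y : List (RTerm m)} (S : List (RTerm m)) {y : RTerm m} (hy : y ∈ Y) :
    beval A v y ⊓ beval A v (sprodBy Y S) =
      if decide (y ∈ S) then beval A v (sprodBy Y S) else ⊥ := by
  have hle := beval_sprodBy A v Y S ▸ Finset.inf_le (List.mem_toFinset.2 hy)
  by_cases hyS : y ∈ S <;>
    simp only [hyS, if_true, if_false, decide_true, decide_false] at hle ⊢
  · exact inf_eq_right.2 hle
  · exact inf_comm (beval A v y) _ ▸ (le_compl_iff_disjoint_right.1 hle).eq_bot

theorem eq_top_of_forall_sprodBy_le (Y : List (RTerm m)) {b : B}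
    (h : ∀ S ∈ Y.sublists, beval A v (sprodBy Y S) ≤ b) : b = ⊤ := by
  induction Y with
  | nil => simpa [sprodBy, beval] using h [] (List.mem_sublists.2 List.Sublist.slnil)
  | cons y Y ih =>
    refine ih fun S hS => ?_
    have hSY := List.mem_sublists.1 hS
    have hneg := h S (List.mem_sublists.2 (hSY.cons y))
    rw [beval_sprodBy, List.toFinset_cons] at hneg
    -- a repeated generator does not change the value of a sign product
    by_cases hy : y ∈ Y
    · rwa [Finset.insert_eq_of_mem (List.mem_toFinset.2 hy), ← beval_sprodBy] at hneg
    have hpos := h (y :: S) (List.mem_sublists.2 (hSY.cons_cons y))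
    have hyS : y ∉ S := fun h => hy (hSY.subset h)
    have hS' : (Y.toFinset.inf fun x => if x ∈ y :: S then beval A v x else (beval A v x)ᶜ) =
        beval A v (sprodBy Y S) := by
      rw [beval_sprodBy]
      refine Finset.inf_congr rfl fun x hx => ?_
      have : x ≠ y := fun e => hy (e ▸ List.mem_toFinset.1 hx)
      simp [this]
    rw [beval_sprodBy, List.toFinset_cons, Finset.inf_insert, if_pos List.mem_cons_self,
      hS'] at hpos
    rw [Finset.inf_insert, if_neg hyS, ← beval_sprodBy] at hneg
    calc beval A v (sprodBy Y S)
        = (beval A v y ⊓ beval A v (sprodBy Y S)) ⊔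
            ((beval A v y)ᶜ ⊓ beval A v (sprodBy Y S)) := by
          rw [← inf_sup_right, sup_compl_eq_top, top_inf_eq]
      _ ≤ b := sup_le hpos hneg

theorem sup_sublists_sprodBy (Y : List (RTerm m)) :
    Y.sublists.toFinset.sup (fun S => beval A v (sprodBy Y S)) = ⊤ :=
  eq_top_of_forall_sprodBy_le A v Y fun _ hS =>
    Finset.le_sup (f := fun S => beval A v (sprodBy Y S)) (List.mem_toFinset.2 hS)

/-- `forms m k` consists of the sign products over `generators m k`. -/
def generators (m : ℕ) : ℕ → List (RTerm m)
  | 0 => listD m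
  | k + 1 => listD m ++ listC (forms m k)

theorem mem_listC {Y : List (RTerm m)} {x : RTerm m} :
    x ∈ listC Y ↔ (∃ a ∈ Y, ∃ b ∈ Y, comp a b = x) ∨ ∃ a ∈ Y, conv a = x := by
  simp [listC]

theorem listD_subset_generators (k : ℕ) : listD m ⊆ generators m k := by
  cases k with
  | zero => exact List.Subset.refl _
  | succ k => exact List.subset_append_left _ _

theorem isBoolComb_of_mem_generators {k : ℕ} {x : RTerm m} (hx : x ∈ generators m k) :
    IsBoolComb (generators m k) x := by
  cases k <;> cases x <;> first | exact hx | simp [generators, listD, listC] at hx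

theorem not_mem_listC_of_mem_listD {Y : List (RTerm m)} {y : RTerm m} (hy : y ∈ listD m) :
    y ∉ listC Y := by
  simp only [listD, List.mem_cons, List.mem_ofFn] at hy
  rcases hy with rfl | ⟨i, rfl⟩ <;> simp [mem_listC]

theorem isBoolComb_of_mem_forms {k : ℕ} {σ : RTerm m} (hσ : σ ∈ forms m k) :
    IsBoolComb (generators m k) σ := by
  have hD : ∀ y ∈ listD m, IsBoolComb (generators m k) y := fun y hy =>
    isBoolComb_of_mem_generators (listD_subset_generators k hy)
  cases k with
  | zero =>
    obtain ⟨S, -, rfl⟩ := List.mem_map.1 hσ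
    exact isBoolComb_sprodBy S hD
  | succ k =>
    obtain ⟨S, -, hσ⟩ := List.mem_flatMap.1 hσ
    obtain ⟨T, -, rfl⟩ := List.mem_map.1 hσ
    exact ⟨isBoolComb_sprodBy S hD, isBoolComb_sprodBy T fun y hy =>
      isBoolComb_of_mem_generators (List.mem_append_right _ hy)⟩

theorem exists_forms_of_isBoolComb {k : ℕ} {ρ : RTerm m}
    (hρ : IsBoolComb (generators m k) ρ) :
    ∃ S : Finset (RTerm m), (∀ σ ∈ S, σ ∈ forms m k) ∧
      ∀ (B : Type) [BooleanAlgebra B] (A : RelBAO B) (v : Fin m → B),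
        beval A v ρ = S.sup (beval A v) := by
  cases k with
  | zero =>
    refine ⟨(((listD m).sublists.toFinset).filter fun S =>
        boolEval (fun y => decide (y ∈ S)) ρ).image (sprodBy (listD m)), ?_, fun B _ A v => ?_⟩
    · simp only [Finset.mem_image, Finset.mem_filter, List.mem_toFinset]
      rintro _ ⟨S, ⟨hS, -⟩, rfl⟩
      exact List.mem_map_of_mem hS
    · rw [Finset.sup_image]
      exact beval_eq_sup_filter A v (sup_sublists_sprodBy A v _) _
        (fun S _ y hy => beval_inf_sprodBy A v S hy) hρ
  | succ k =>
    let D := listD m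
    let C := listC (forms m k)
    refine ⟨((D.sublists.toFinset ×ˢ C.sublists.toFinset).filter fun ST =>
        boolEval (fun y => decide (y ∈ ST.1 ∨ y ∈ ST.2)) ρ).image
          fun ST => mul (sprodBy D ST.1) (sprodBy C ST.2), ?_, fun B _ A v => ?_⟩
    · simp only [Finset.mem_image, Finset.mem_filter, Finset.mem_product, List.mem_toFinset]
      rintro _ ⟨⟨S, T⟩, ⟨⟨hS, hT⟩, -⟩, rfl⟩
      exact List.mem_flatMap.2 ⟨S, hS, List.mem_map_of_mem hT⟩
    · rw [Finset.sup_image]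
      have hcover : (D.sublists.toFinset ×ˢ C.sublists.toFinset).sup
          (beval A v ∘ fun ST => mul (sprodBy D ST.1) (sprodBy C ST.2)) = ⊤ := by
        have h := Finset.sup_inf_sup D.sublists.toFinset C.sublists.toFinset
          (fun S => beval A v (sprodBy D S)) (fun T => beval A v (sprodBy C T))
        rw [sup_sublists_sprodBy, sup_sublists_sprodBy, top_inf_eq] at h
        exact h.symm
      refine beval_eq_sup_filter A v hcover _ ?_ hρ
      rintro ⟨S, T⟩ hST y hy
      simp only [Finset.mem_product, List.mem_toFinset, List.mem_sublists] at hST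
      simp only [Function.comp, beval]
      rcases List.mem_append.1 (show y ∈ D ++ C from hy) with hyD | hyC
      · have hyT : y ∉ T := fun h => not_mem_listC_of_mem_listD hyD (hST.2.subset h)
        rw [← inf_assoc, beval_inf_sprodBy A v S hyD]
        by_cases hyS : y ∈ S <;> simp [hyS, hyT]
      · have hyS : y ∉ S := fun h => not_mem_listC_of_mem_listD (hST.1.subset h) hyC
        rw [inf_left_comm, beval_inf_sprodBy A v T hyC]
        by_cases hyT : y ∈ T <;> simp [hyS, hyT]

noncomputable def finsetSup (S : Finset (RTerm m)) : RTerm m :=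
  S.toList.foldr add zero

theorem beval_finsetSup (S : Finset (RTerm m)) :
    beval A v (finsetSup S) = S.sup (beval A v) := by
  suffices h : ∀ L : List (RTerm m), beval A v (L.foldr add zero) = L.toFinset.sup (beval A v) by
    rw [finsetSup, h, Finset.toList_toFinset]
  intro L
  induction L with
  | nil => rfl
  | cons σ L ih => rw [List.foldr_cons, beval, ih, List.toFinset_cons, Finset.sup_insert]

theorem isBoolComb_finsetSup {Y : List (RTerm m)} {S : Finset (RTerm m)}
    (hS : ∀ σ ∈ S, IsBoolComb Y σ) : IsBoolComb Y (finsetSup S) := by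
  suffices h : ∀ L : List (RTerm m), (∀ σ ∈ L, IsBoolComb Y σ) →
      IsBoolComb Y (L.foldr add zero) from
    h _ fun σ hσ => hS σ (Finset.mem_toList.1 hσ)
  intro L hL
  induction L with
  | nil => trivial
  | cons σ L ih =>
    exact ⟨hL σ List.mem_cons_self, ih fun ρ h => hL ρ (List.mem_cons_of_mem σ h)⟩

def BoolDefinable (Y : List (RTerm m)) (τ : RTerm m) : Prop :=
  ∃ ρ, IsBoolComb Y ρ ∧
    ∀ (B : Type) [BooleanAlgebra B] (A : RelBAO B) (v : Fin m → B), beval A v τ = beval A v ρ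

namespace BoolDefinable

variable {Y Y' : List (RTerm m)} {a b τ : RTerm m}

theorem of_isBoolComb (h : IsBoolComb Y τ) : BoolDefinable Y τ :=
  ⟨τ, h, fun _ _ _ _ => rfl⟩

theorem congr (h : BoolDefinable Y a)
    (e : ∀ (B : Type) [BooleanAlgebra B] (A : RelBAO B) (v : Fin m → B),
      beval A v τ = beval A v a) : BoolDefinable Y τ :=
  let ⟨ρ, hρ, eρ⟩ := h
  ⟨ρ, hρ, fun B _ A v => (e B A v).trans (eρ B A v)⟩

theorem zero : BoolDefinable Y zero := of_isBoolComb trivial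

theorem one : BoolDefinable Y one := of_isBoolComb trivial

theorem add (ha : BoolDefinable Y a) (hb : BoolDefinable Y b) : BoolDefinable Y (add a b) :=
  let ⟨ρ, hρ, eρ⟩ := ha
  let ⟨ρ', hρ', eρ'⟩ := hb
  ⟨.add ρ ρ', ⟨hρ, hρ'⟩, fun B _ A v => by simp only [beval, eρ B A v, eρ' B A v]⟩

theorem mul (ha : BoolDefinable Y a) (hb : BoolDefinable Y b) : BoolDefinable Y (mul a b) :=
  let ⟨ρ, hρ, eρ⟩ := ha
  let ⟨ρ', hρ', eρ'⟩ := hb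
  ⟨.mul ρ ρ', ⟨hρ, hρ'⟩, fun B _ A v => by simp only [beval, eρ B A v, eρ' B A v]⟩

theorem neg (ha : BoolDefinable Y a) : BoolDefinable Y (neg a) :=
  let ⟨ρ, hρ, eρ⟩ := ha
  ⟨.neg ρ, hρ, fun B _ A v => by simp only [beval, eρ B A v]⟩

theorem of_isBoolComb_of_forall (hY : ∀ y ∈ Y, BoolDefinable Y' y) {ρ : RTerm m}
    (hρ : IsBoolComb Y ρ) : BoolDefinable Y' ρ := by
  induction ρ with
  | zero => exact .zero
  | one => exact .one
  | var _ | id | comp _ _ | conv _ => exact hY _ hρ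
  | add x y ihx ihy => exact (ihx hρ.1).add (ihy hρ.2)
  | mul x y ihx ihy => exact (ihx hρ.1).mul (ihy hρ.2)
  | neg x ihx => exact (ihx hρ).neg

theorem of_forall (h : BoolDefinable Y τ) (hY : ∀ y ∈ Y, BoolDefinable Y' y) :
    BoolDefinable Y' τ :=
  let ⟨_, hρ, eρ⟩ := h
  (of_isBoolComb_of_forall hY hρ).congr eρ

theorem exists_forms {k : ℕ} (h : BoolDefinable (generators m k) τ) :
    ∃ S : Finset (RTerm m), (∀ σ ∈ S, σ ∈ forms m k) ∧
      ∀ (B : Type) [BooleanAlgebra B] (A : RelBAO B) (v : Fin m → B),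
        beval A v τ = S.sup (beval A v) :=
  let ⟨_, hρ, eρ⟩ := h
  let ⟨S, hS, eS⟩ := exists_forms_of_isBoolComb hρ
  ⟨S, hS, fun B _ A v => (eρ B A v).trans (eS B A v)⟩

theorem comp {k : ℕ} (ha : BoolDefinable (generators m k) a)
    (hb : BoolDefinable (generators m k) b) : BoolDefinable (generators m (k + 1)) (comp a b) := by
  obtain ⟨S, hS, eS⟩ := ha.exists_forms
  obtain ⟨T, hT, eT⟩ := hb.exists_forms
  refine (of_isBoolComb (τ := finsetSup ((S ×ˢ T).image fun p => .comp p.1 p.2)) ?_).congr ?_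
  · refine isBoolComb_finsetSup ?_
    simp only [Finset.mem_image, Finset.mem_product]
    rintro _ ⟨⟨s, t⟩, ⟨hs, ht⟩, rfl⟩
    exact List.mem_append_right _ (mem_listC.2 (Or.inl ⟨s, hS s hs, t, hT t ht, rfl⟩))
  · intro B _ A v
    rw [beval_finsetSup, Finset.sup_image, beval, eS, eT, A.comp_finset_sup]
    rfl

theorem conv {k : ℕ} (ha : BoolDefinable (generators m k) a) :
    BoolDefinable (generators m (k + 1)) (conv a) := by
  obtain ⟨S, hS, eS⟩ := ha.exists_forms
  refine (of_isBoolComb (τ := finsetSup (S.image RTerm.conv)) ?_).congr ?_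
  · refine isBoolComb_finsetSup ?_
    simp only [Finset.mem_image]
    rintro _ ⟨s, hs, rfl⟩
    exact List.mem_append_right _ (mem_listC.2 (Or.inr ⟨s, hS s hs, rfl⟩))
  · intro B _ A v
    rw [beval_finsetSup, Finset.sup_image, beval, eS, A.conv_finset_sup]
    rfl

theorem succ {k : ℕ} (h : BoolDefinable (generators m k) τ) :
    BoolDefinable (generators m (k + 1)) τ := by
  induction k generalizing τ with
  | zero =>
    exact h.of_forall fun y hy =>
      of_isBoolComb (isBoolComb_of_mem_generators (listD_subset_generators 1 hy))
  | succ k ih =>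
    refine h.of_forall fun y hy => ?_
    rcases List.mem_append.1 hy with hyD | hyC
    · exact of_isBoolComb (isBoolComb_of_mem_generators (listD_subset_generators _ hyD))
    · rcases mem_listC.1 hyC with ⟨x, hx, z, hz, rfl⟩ | ⟨x, hx, rfl⟩
      · exact (ih (of_isBoolComb (isBoolComb_of_mem_forms hx))).comp
          (ih (of_isBoolComb (isBoolComb_of_mem_forms hz)))
      · exact (ih (of_isBoolComb (isBoolComb_of_mem_forms hx))).conv

theorem mono {k l : ℕ} (hkl : k ≤ l) (h : BoolDefinable (generators m k) τ) :
    BoolDefinable (generators m l) τ := by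
  induction l, hkl using Nat.le_induction with
  | base => exact h
  | succ l _ ih => exact ih.succ

end BoolDefinable

theorem exists_boolDefinable (τ : RTerm m) : ∃ k, BoolDefinable (generators m k) τ := by
  induction τ with
  | var i =>
    exact ⟨0, .of_isBoolComb (isBoolComb_of_mem_generators
      (List.mem_cons_of_mem _ (List.mem_ofFn.2 ⟨i, rfl⟩)))⟩
  | id => exact ⟨0, .of_isBoolComb (isBoolComb_of_mem_generators List.mem_cons_self)⟩
  | zero => exact ⟨0, .zero⟩
  | one => exact ⟨0, .one⟩
  | add a b iha ihb =>
    obtain ⟨k, ha⟩ := iha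
    obtain ⟨l, hb⟩ := ihb
    exact ⟨max k l, (ha.mono (le_max_left k l)).add (hb.mono (le_max_right k l))⟩
  | mul a b iha ihb =>
    obtain ⟨k, ha⟩ := iha
    obtain ⟨l, hb⟩ := ihb
    exact ⟨max k l, (ha.mono (le_max_left k l)).mul (hb.mono (le_max_right k l))⟩
  | neg a iha =>
    obtain ⟨k, ha⟩ := iha
    exact ⟨k, ha.neg⟩
  | comp a b iha ihb =>
    obtain ⟨k, ha⟩ := iha
    obtain ⟨l, hb⟩ := ihb
    exact ⟨max k l + 1, (ha.mono (le_max_left k l)).comp (hb.mono (le_max_right k l))⟩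
  | conv a iha =>
    obtain ⟨k, ha⟩ := iha
    exact ⟨k + 1, ha.conv⟩

end RTerm

/-- every relation-type term equals a join of normal forms of some
degree `k`, in every Boolean algebra with operators of relation type. -/
theorem stmt_3 (m : ℕ) (τ : RTerm m) :
    ∃ (k : ℕ) (S : Finset (RTerm m)), (∀ σ ∈ S, σ ∈ forms m k) ∧
      ∀ (B : Type) [BooleanAlgebra B] (A : RelBAO B) (v : Fin m → B),
        beval A v τ = S.sup (beval A v) := by
  obtain ⟨k, hk⟩ := τ.exists_boolDefinable
  exact ⟨k, hk.exists_forms⟩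
end

section
/- The following equations from the composition table of Fr_0(RRA_{R,S}) are RRA_{R,S}-valid, i.e. hold under the relativized interpretation over every reflexive symmetric relation W ⊆ U×U: e1;e1 = e1, e1;e2 = 0, e2;e1 = 0, e1;m2 = 0, m2;e1 = 0, e1;m3 = 0, m3;e1 = 0, e2;e2 = e2, e2;m2 = m2, m2;e2 = m2, e2;m3 = m3, and m3;e2 = m3. -/
lemma rint_key {U : Type} (W : Set (U × U)) (v : Fin 0 → Set (U × U)) (a b : U) :
    ((a,b) ∈ rint W v (termE1 (m:=0)) ↔ (a,b) ∈ W ∧ a = b ∧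
        ¬ ∃ c, ((a,c) ∈ W ∧ a ≠ c) ∧ ((c,b) ∈ W ∧ c ≠ b)) ∧
    ((a,b) ∈ rint W v (termE2 (m:=0)) ↔ (a,b) ∈ W ∧ a = b ∧
        ∃ c, ((a,c) ∈ W ∧ a ≠ c) ∧ ((c,b) ∈ W ∧ c ≠ b)) ∧
    ((a,b) ∈ rint W v (termM2 (m:=0)) ↔ (a,b) ∈ W ∧ a ≠ b ∧
        ¬ ∃ c, ((a,c) ∈ W ∧ a ≠ c) ∧ ((c,b) ∈ W ∧ c ≠ b)) ∧
    ((a,b) ∈ rint W v (termM3 (m:=0)) ↔ (a,b) ∈ W ∧ a ≠ b ∧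
        ∃ c, ((a,c) ∈ W ∧ a ≠ c) ∧ ((c,b) ∈ W ∧ c ≠ b)) := by
  simp only [termE1, termE2, termM2, termM3, RTerm.div, rint, Set.mem_inter_iff,
    Set.mem_setOf_eq, Set.mem_diff]
  refine ⟨?_, ?_, ?_, ?_⟩ <;> aesop

lemma mem_comp {U : Type} {W : Set (U × U)} {v : Fin 0 → Set (U × U)} {τ σ : RTerm 0}
    {a b : U} :
    (a,b) ∈ rint W v (RTerm.comp τ σ) ↔
      (a,b) ∈ W ∧ ∃ c, (a,c) ∈ rint W v τ ∧ (c,b) ∈ rint W v σ := Iff.rfl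

lemma mem_zero {U : Type} {W : Set (U × U)} {v : Fin 0 → Set (U × U)} {a b : U} :
    (a,b) ∈ rint W v (RTerm.zero (m:=0)) ↔ False := Iff.rfl

lemma mem_E1 {U : Type} (W : Set (U × U)) (v : Fin 0 → Set (U × U)) (a b : U) :
    (a,b) ∈ rint W v (termE1 (m:=0)) ↔ (a,b) ∈ W ∧ a = b ∧
      ¬ ∃ c, ((a,c) ∈ W ∧ a ≠ c) ∧ ((c,b) ∈ W ∧ c ≠ b) := (rint_key W v a b).1

lemma mem_E2 {U : Type} (W : Set (U × U)) (v : Fin 0 → Set (U × U)) (a b : U) :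
    (a,b) ∈ rint W v (termE2 (m:=0)) ↔ (a,b) ∈ W ∧ a = b ∧
      ∃ c, ((a,c) ∈ W ∧ a ≠ c) ∧ ((c,b) ∈ W ∧ c ≠ b) := (rint_key W v a b).2.1

lemma mem_M2 {U : Type} (W : Set (U × U)) (v : Fin 0 → Set (U × U)) (a b : U) :
    (a,b) ∈ rint W v (termM2 (m:=0)) ↔ (a,b) ∈ W ∧ a ≠ b ∧
      ¬ ∃ c, ((a,c) ∈ W ∧ a ≠ c) ∧ ((c,b) ∈ W ∧ c ≠ b) := (rint_key W v a b).2.2.1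

lemma mem_M3 {U : Type} (W : Set (U × U)) (v : Fin 0 → Set (U × U)) (a b : U) :
    (a,b) ∈ rint W v (termM3 (m:=0)) ↔ (a,b) ∈ W ∧ a ≠ b ∧
      ∃ c, ((a,c) ∈ W ∧ a ≠ c) ∧ ((c,b) ∈ W ∧ c ≠ b) := (rint_key W v a b).2.2.2

/-- the composition table of `Fr_0(RRA_{R,S})`:
`e1;e1 = e1`, `e1;e2 = 0`, `e2;e1 = 0`, `e1;m2 = 0`, `m2;e1 = 0`, `e1;m3 = 0`,
`m3;e1 = 0`, `e2;e2 = e2`, `e2;m2 = m2`, `m2;e2 = m2`, `e2;m3 = m3`,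
`m3;e2 = m3` are all `RRA_{R,S}`-valid. -/
theorem stmt_8 :
    Valid {RS.R, RS.S} (RTerm.comp (termE1 (m := 0)) termE1) termE1 ∧
    Valid {RS.R, RS.S} (RTerm.comp (termE1 (m := 0)) termE2) .zero ∧
    Valid {RS.R, RS.S} (RTerm.comp (termE2 (m := 0)) termE1) .zero ∧
    Valid {RS.R, RS.S} (RTerm.comp (termE1 (m := 0)) termM2) .zero ∧
    Valid {RS.R, RS.S} (RTerm.comp (termM2 (m := 0)) termE1) .zero ∧
    Valid {RS.R, RS.S} (RTerm.comp (termE1 (m := 0)) termM3) .zero ∧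
    Valid {RS.R, RS.S} (RTerm.comp (termM3 (m := 0)) termE1) .zero ∧
    Valid {RS.R, RS.S} (RTerm.comp (termE2 (m := 0)) termE2) termE2 ∧
    Valid {RS.R, RS.S} (RTerm.comp (termE2 (m := 0)) termM2) termM2 ∧
    Valid {RS.R, RS.S} (RTerm.comp (termM2 (m := 0)) termE2) termM2 ∧
    Valid {RS.R, RS.S} (RTerm.comp (termE2 (m := 0)) termM3) termM3 ∧
    Valid {RS.R, RS.S} (RTerm.comp (termM3 (m := 0)) termE2) termM3 := by
  refine ⟨?_, ?_, ?_, ?_, ?_, ?_, ?_, ?_, ?_, ?_, ?_, ?_⟩ <;>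
    (intro U W v hH _
     have hrefl := hH.1 (by simp)
     have hsym := hH.2 (by simp)
     ext ⟨a, b⟩
     simp only [mem_comp, mem_zero, mem_E1, mem_E2, mem_M2, mem_M3, iff_false])
  -- e1;e1 = e1
  · constructor
    · rintro ⟨hw, c, ⟨hac, rfl, hn⟩, hcb, rfl, hn2⟩
      exact ⟨hw, rfl, hn⟩
    · rintro ⟨hw, rfl, hn⟩
      exact ⟨hw, a, ⟨hw, rfl, hn⟩, hw, rfl, hn⟩
  -- e1;e2 = 0
  · rintro ⟨hw, c, ⟨hac, rfl, hn⟩, hcb, rfl, hx⟩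
    exact hn hx
  -- e2;e1 = 0
  · rintro ⟨hw, c, ⟨hac, rfl, hx⟩, hcb, rfl, hn⟩
    exact hn hx
  -- e1;m2 = 0
  · rintro ⟨hw, c, ⟨hac, rfl, hn⟩, hcb, hne, -⟩
    exact hn ⟨b, ⟨hcb, hne⟩, hsym _ _ hcb, Ne.symm hne⟩
  -- m2;e1 = 0
  · rintro ⟨hw, c, ⟨hac, hne, -⟩, hcb, rfl, hn⟩
    exact hn ⟨a, ⟨hsym _ _ hac, Ne.symm hne⟩, hac, hne⟩
  -- e1;m3 = 0
  · rintro ⟨hw, c, ⟨hac, rfl, hn⟩, hcb, hne, -⟩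
    exact hn ⟨b, ⟨hcb, hne⟩, hsym _ _ hcb, Ne.symm hne⟩
  -- m3;e1 = 0
  · rintro ⟨hw, c, ⟨hac, hne, -⟩, hcb, rfl, hn⟩
    exact hn ⟨a, ⟨hsym _ _ hac, Ne.symm hne⟩, hac, hne⟩
  -- e2;e2 = e2
  · constructor
    · rintro ⟨hw, c, ⟨hac, rfl, -⟩, h2⟩
      exact h2
    · rintro ⟨hw, rfl, hx⟩
      exact ⟨hw, a, ⟨hw, rfl, hx⟩, hw, rfl, hx⟩
  -- e2;m2 = m2
  · constructor
    · rintro ⟨hw, c, ⟨hac, rfl, -⟩, h2⟩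
      exact h2
    · rintro ⟨hw, hne, hn⟩
      exact ⟨hw, a, ⟨(hrefl a b hw).1, rfl, b, ⟨hw, hne⟩, hsym _ _ hw, Ne.symm hne⟩, hw, hne, hn⟩
  -- m2;e2 = m2
  · constructor
    · rintro ⟨hw, c, h1, hcb, rfl, -⟩
      exact h1
    · rintro ⟨hw, hne, hn⟩
      exact ⟨hw, b, ⟨hw, hne, hn⟩, (hrefl a b hw).2, rfl, a, ⟨hsym _ _ hw, Ne.symm hne⟩, hw, hne⟩
  -- e2;m3 = m3
  · constructor
    · rintro ⟨hw, c, ⟨hac, rfl, -⟩, h2⟩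
      exact h2
    · rintro ⟨hw, hne, hn⟩
      exact ⟨hw, a, ⟨(hrefl a b hw).1, rfl, b, ⟨hw, hne⟩, hsym _ _ hw, Ne.symm hne⟩, hw, hne, hn⟩
  -- m3;e2 = m3
  · constructor
    · rintro ⟨hw, c, h1, hcb, rfl, -⟩
      exact h1
    · rintro ⟨hw, hne, hn⟩
      exact ⟨hw, b, ⟨hw, hne, hn⟩, (hrefl a b hw).2, rfl, a, ⟨hsym _ _ hw, Ne.symm hne⟩, hw, hne⟩
end

section
/- For every m ≥ 1, the m-generated free weakly associative relation algebra, i.e. the free algebra Fr_m(RRA_{R,S}) of the class of algebras of subrelations of a reflexive symmetric relation, is not atomic: there is a relation-type term τ over m variables such that τ = 0 is not RRA_{R,S}-valid, yet no atom of Fr_m(RRA_{R,S}) lies below [τ]. -/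
/-!
Below the diversity element `0′` there is no atom. Suppose `σ ≤ 0′` were an atom, realised at a
pair `(a, b)`, `a ≠ b`, of a reflexive symmetric `W`. Unravel `W` into levels: `layered W` lives
on `U × ℕ`, keeps loops inside one level and lets proper edges change the level by at most one.
The projection onto `W` is a bounded morphism, so `σ` still holds at `((a, 0), (b, 0))`. A term of
depth `d` evaluated at level `0` only sees levels `≤ d`, hence `σ` keeps holding there when all
loops above level `d` are painted into `x₀`, and also when they are painted out of `x₀`.
The term "`1 ;` some reachable loop lies in `x₀` at distance more than `2d + 1` from every loop
outside `x₀`" holds in the first model (walk up from `b` along the edge `ba`) and fails in the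
second (from an `x₀`-loop, which sits at level `≤ d`, level `d + 1` is at most `2d + 1` steps
away), so it splits `σ`.
-/

open Function

namespace RTerm

variable {m : ℕ}

def depth : RTerm m → ℕ
  | .var _ | .zero | .one | .id => 0
  | .add a b | .mul a b => max a.depth b.depth
  | .neg a => a.depth
  | .comp a b => max a.depth b.depth + 1
  | .conv a => a.depth + 1

/-- A loop `(x, x)` satisfies `φ.reach k` iff a loop `(z, z)` satisfying `φ` is reached from `x`
in at most `k` steps along edges present in both directions. -/
def reach (φ : RTerm m) : ℕ → RTerm m
  | 0 => .mul .id φ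
  | k + 1 => .mul .id (.comp (.comp .one (φ.reach k)) .one)

def deepIn (i : Fin m) (k : ℕ) : RTerm m :=
  .mul (.mul .id (.var i)) (.neg ((mul .id (.neg (.var i))).reach k))

end RTerm

open RTerm

section Interpretation

variable {U : Type*} {m : ℕ} {W : Set (U × U)} {v : Fin m → Set (U × U)}

theorem rint_subset (hv : ∀ i, v i ⊆ W) : ∀ ρ : RTerm m, rint W v ρ ⊆ W
  | .var i => hv i
  | .zero => Set.empty_subset W
  | .one => subset_rfl
  | .add a b => Set.union_subset (rint_subset hv a) (rint_subset hv b)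
  | .mul a _ => Set.inter_subset_left.trans (rint_subset hv a)
  | .id | .neg _ | .comp _ _ | .conv _ => fun _ hp => hp.1

theorem rint_reach_subset {φ : RTerm m} {k : ℕ} {q : U × U} (h : q ∈ rint W v (φ.reach k)) :
    q ∈ W ∧ q.1 = q.2 := by
  cases k <;> exact h.1

theorem mem_rint_reach_succ {φ : RTerm m} {k : ℕ} {x : U} :
    (x, x) ∈ rint W v (φ.reach (k + 1)) ↔
      (x, x) ∈ W ∧ ∃ c, (x, c) ∈ W ∧ (c, x) ∈ W ∧ (c, c) ∈ rint W v (φ.reach k) := by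
  constructor
  · rintro ⟨-, hx, c, ⟨hxc, c', -, hc'⟩, hcx⟩
    obtain rfl : c' = c := (rint_reach_subset hc').2
    exact ⟨hx, c', hxc, hcx, hc'⟩
  · rintro ⟨hx, c, hxc, hcx, hc⟩
    exact ⟨⟨hx, rfl⟩, hx, c, ⟨hxc, c, hxc, hc⟩, hcx⟩

theorem rint_reach_mono {φ : RTerm m} {j k : ℕ} (hjk : j ≤ k) :
    rint W v (φ.reach j) ⊆ rint W v (φ.reach k) := by
  refine monotone_nat_of_le_succ (f := fun k => rint W v (φ.reach k)) (fun k q hq => ?_) hjk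
  obtain ⟨hqW, hxy⟩ := rint_reach_subset hq
  obtain ⟨x, y⟩ := q
  obtain rfl : x = y := hxy
  exact mem_rint_reach_succ.2 ⟨hqW, x, hqW, hqW, hq⟩

theorem mem_rint_one_comp_reach {φ : RTerm m} {k : ℕ} {p : U × U} :
    p ∈ rint W v (.comp .one (φ.reach k)) ↔ p ∈ W ∧ (p.2, p.2) ∈ rint W v (φ.reach k) := by
  constructor
  · rintro ⟨hp, c, -, hc⟩
    obtain rfl : c = p.2 := (rint_reach_subset hc).2
    exact ⟨hp, hc⟩
  · rintro ⟨hp, hc⟩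
    exact ⟨hp, p.2, hp, hc⟩

end Interpretation

section Atoms

variable {m : ℕ} {H : Set RS}

theorem exists_mem_rint_of_not_valid_zero {σ : RTerm m} (h : ¬ Valid H σ .zero) :
    ∃ (U : Type) (W : Set (U × U)) (v : Fin m → Set (U × U)),
      IsHRel H W ∧ (∀ i, v i ⊆ W) ∧ (rint W v σ).Nonempty := by
  by_contra! hempty
  exact h hempty

theorem IsAtomT.mem_rint_iff {σ : RTerm m} (hσ : IsAtomT H σ) (ρ : RTerm m) {U : Type}
    {W : Set (U × U)} {v₁ v₂ : Fin m → Set (U × U)} (hW : IsHRel H W)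
    (hv₁ : ∀ i, v₁ i ⊆ W) (hv₂ : ∀ i, v₂ i ⊆ W) {p : U × U}
    (h₁ : p ∈ rint W v₁ σ) (h₂ : p ∈ rint W v₂ σ) :
    p ∈ rint W v₁ ρ ↔ p ∈ rint W v₂ ρ := by
  rcases hσ.2 ρ with h | h
  · refine iff_of_false (fun hp => ?_) (fun hp => ?_)
    · exact (h U W v₁ hW hv₁).subset ⟨h₁, hp⟩
    · exact (h U W v₂ hW hv₂).subset ⟨h₂, hp⟩
  · refine iff_of_true (by_contra fun hp => ?_) (by_contra fun hp => ?_)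
    · exact (h U W v₁ hW hv₁).subset ⟨h₁, rint_subset hv₁ σ h₁, hp⟩
    · exact (h U W v₂ hW hv₂).subset ⟨h₂, rint_subset hv₂ σ h₂, hp⟩

end Atoms

section Layered

variable {U : Type*} {m : ℕ} {W : Set (U × U)}

def layered (W : Set (U × U)) : Set ((U × ℕ) × (U × ℕ)) :=
  {q | (q.1.1, q.2.1) ∈ W ∧ (q.1.1 = q.2.1 → q.1.2 = q.2.2) ∧
    q.1.2 ≤ q.2.2 + 1 ∧ q.2.2 ≤ q.1.2 + 1}

def layeredVal (W : Set (U × U)) (v : Fin m → Set (U × U)) :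
    Fin m → Set ((U × ℕ) × (U × ℕ)) :=
  fun i => layered W ∩ {q | (q.1.1, q.2.1) ∈ v i}

theorem loop_mem_layered {x : U} (hx : (x, x) ∈ W) (s : ℕ) :
    (((x, s), (x, s)) : (U × ℕ) × (U × ℕ)) ∈ layered W :=
  ⟨hx, fun _ => rfl, Nat.le_succ s, Nat.le_succ s⟩

theorem layered_swap {q : (U × ℕ) × (U × ℕ)} (hq : q ∈ layered W) (h : (q.2.1, q.1.1) ∈ W) :
    (q.2, q.1) ∈ layered W :=
  ⟨h, fun h' => (hq.2.1 h'.symm).symm, hq.2.2.2, hq.2.2.1⟩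

theorem isHRel_layered {H : Set RS} (hW : IsHRel H W) : IsHRel H (layered W) := by
  refine ⟨fun hR a b hab => ?_, fun hS a b hab => layered_swap hab (hW.2 hS _ _ hab.1)⟩
  obtain ⟨ha, hb⟩ := hW.1 hR _ _ hab.1
  exact ⟨loop_mem_layered ha _, loop_mem_layered hb _⟩

theorem rint_layered {v : Fin m → Set (U × U)} (hv : ∀ i, v i ⊆ W) :
    ∀ ρ : RTerm m, rint (layered W) (layeredVal W v) ρ =
      layered W ∩ {q | (q.1.1, q.2.1) ∈ rint W v ρ}
  | .var _ => rfl
  | .zero => by simp [rint]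
  | .one => by ext q; simpa [rint] using fun hq => hq.1
  | .id => by
      ext ⟨⟨x, s⟩, ⟨y, t⟩⟩
      simp only [rint, Set.mem_ofPred_eq, Set.mem_inter_iff, Prod.mk.injEq]
      exact ⟨fun ⟨hq, hx, _⟩ => ⟨hq, hq.1, hx⟩, fun ⟨hq, _, hx⟩ => ⟨hq, hx, hq.2.1 hx⟩⟩
  | .add a b => by
      ext q
      simp only [rint, rint_layered hv a, rint_layered hv b, Set.mem_union, Set.mem_inter_iff,
        Set.mem_ofPred_eq]
      tauto
  | .mul a b => by
      ext q
      simp only [rint, rint_layered hv a, rint_layered hv b, Set.mem_inter_iff, Set.mem_ofPred_eq]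
      tauto
  | .neg a => by
      ext q
      simp only [rint, rint_layered hv a, Set.mem_sdiff, Set.mem_inter_iff, Set.mem_ofPred_eq]
      exact ⟨fun ⟨hq, h⟩ => ⟨hq, hq.1, fun h' => h ⟨hq, h'⟩⟩,
        fun ⟨hq, _, h⟩ => ⟨hq, fun h' => h h'.2⟩⟩
  | .conv a => by
      ext q
      simp only [rint, rint_layered hv a, Set.mem_inter_iff, Set.mem_ofPred_eq]
      exact ⟨fun ⟨hq, _, h⟩ => ⟨hq, hq.1, h⟩,
        fun ⟨hq, _, h⟩ => ⟨hq, layered_swap hq (rint_subset hv a h), h⟩⟩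
  | .comp a b => by
      ext q
      simp only [rint, rint_layered hv a, rint_layered hv b, Set.mem_inter_iff, Set.mem_ofPred_eq]
      refine ⟨fun ⟨hq, c, ⟨_, h₁⟩, ⟨_, h₂⟩⟩ => ⟨hq, hq.1, c.1, h₁, h₂⟩,
        fun ⟨hq, _, c, h₁, h₂⟩ => ?_⟩
      have hc₁ := rint_subset hv a h₁
      have hc₂ := rint_subset hv b h₂
      -- lift `c` to the level of `q.1`, unless `c` is the base point of one end of `q`
      by_cases hcx : c = q.1.1
      · subst hcx
        exact ⟨hq, q.1, ⟨loop_mem_layered hc₁ _, h₁⟩, hq, h₂⟩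
      by_cases hcy : c = q.2.1
      · subst hcy
        exact ⟨hq, q.2, ⟨hq, h₁⟩, loop_mem_layered hc₂ _, h₂⟩
      exact ⟨hq, (c, q.1.2), ⟨⟨hc₁, fun _ => rfl, Nat.le_succ _, Nat.le_succ _⟩, h₁⟩,
        ⟨⟨hc₂, fun h => absurd h hcy, hq.2.2⟩, h₂⟩⟩

theorem mem_rint_layered_congr {D : ℕ} {v₁ v₂ : Fin m → Set ((U × ℕ) × (U × ℕ))}
    (hv₁ : ∀ i, v₁ i ⊆ layered W) (hv₂ : ∀ i, v₂ i ⊆ layered W)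
    (hagree : ∀ i q, q.1.2 ≤ D → q.2.2 ≤ D → (q ∈ v₁ i ↔ q ∈ v₂ i)) :
    ∀ (ρ : RTerm m) (q : (U × ℕ) × (U × ℕ)), q.1.2 + ρ.depth ≤ D → q.2.2 + ρ.depth ≤ D →
      (q ∈ rint (layered W) v₁ ρ ↔ q ∈ rint (layered W) v₂ ρ)
  | .var i, q, h₁, h₂ => hagree i q (by omega) (by omega)
  | .zero, _, _, _ | .one, _, _, _ | .id, _, _, _ => Iff.rfl
  | .add a b, q, h₁, h₂ => by
      simp only [depth] at h₁ h₂
      exact or_congr (mem_rint_layered_congr hv₁ hv₂ hagree a q (by omega) (by omega))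
        (mem_rint_layered_congr hv₁ hv₂ hagree b q (by omega) (by omega))
  | .mul a b, q, h₁, h₂ => by
      simp only [depth] at h₁ h₂
      exact and_congr (mem_rint_layered_congr hv₁ hv₂ hagree a q (by omega) (by omega))
        (mem_rint_layered_congr hv₁ hv₂ hagree b q (by omega) (by omega))
  | .neg a, q, h₁, h₂ => and_congr Iff.rfl
      (not_congr (mem_rint_layered_congr hv₁ hv₂ hagree a q h₁ h₂))
  | .conv a, q, h₁, h₂ => by
      simp only [depth] at h₁ h₂
      exact and_congr Iff.rfl
        (mem_rint_layered_congr hv₁ hv₂ hagree a (q.2, q.1) (by dsimp only; omega)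
          (by dsimp only; omega))
  | .comp a b, q, h₁, h₂ => by
      simp only [depth] at h₁ h₂
      have ha := fun (c : U × ℕ) (hc : c.2 ≤ q.1.2 + 1) =>
        mem_rint_layered_congr hv₁ hv₂ hagree a (q.1, c) (by dsimp only; omega)
          (by dsimp only; omega)
      have hb := fun (c : U × ℕ) (hc : c.2 ≤ q.1.2 + 1) =>
        mem_rint_layered_congr hv₁ hv₂ hagree b (c, q.2) (by dsimp only; omega)
          (by dsimp only; omega)
      refine and_congr Iff.rfl ⟨fun ⟨c, hc₁, hc₂⟩ => ?_, fun ⟨c, hc₁, hc₂⟩ => ?_⟩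
      · have hc := (rint_subset hv₁ a hc₁).2.2.2
        exact ⟨c, (ha c hc).1 hc₁, (hb c hc).1 hc₂⟩
      · have hc := (rint_subset hv₂ a hc₁).2.2.2
        exact ⟨c, (ha c hc).2 hc₁, (hb c hc).2 hc₂⟩

end Layered

section Walks

variable {U : Type*} {m : ℕ} {W : Set (U × U)} {v : Fin m → Set ((U × ℕ) × (U × ℕ))}

theorem exists_loop_of_mem_rint_reach {φ : RTerm m} :
    ∀ (k : ℕ) (x : U × ℕ), (x, x) ∈ rint (layered W) v (φ.reach k) →
      ∃ z : U × ℕ, (z, z) ∈ rint (layered W) v (φ.reach 0) ∧ x.2 ≤ z.2 + k ∧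
        ((∃ y ≠ x.1, (x.1, y) ∈ W) → ∃ y ≠ z.1, (z.1, y) ∈ W)
  | 0, x, hx => ⟨x, hx, le_rfl, id⟩
  | k + 1, x, hx => by
      obtain ⟨-, c, hxc, hcx, hc⟩ := mem_rint_reach_succ.1 hx
      obtain ⟨z, hz, hcz, hnz⟩ := exists_loop_of_mem_rint_reach k c hc
      have hxc' : x.2 ≤ c.2 + 1 := hxc.2.2.1
      refine ⟨z, hz, by omega, fun hnx => hnz ?_⟩
      by_cases hcx' : c.1 = x.1
      · rwa [hcx']
      · exact ⟨x.1, Ne.symm hcx', hcx.1⟩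

/-- Zig-zagging along the edge `xy` climbs one level per step. -/
theorem mem_rint_reach_of_forall_level (hW : IsHRel {RS.R, RS.S} W) {φ : RTerm m} :
    ∀ (n s : ℕ) {x y : U}, y ≠ x → (x, y) ∈ W →
      (∀ u, (u, u) ∈ W →
        (((u, s + n), (u, s + n)) : (U × ℕ) × (U × ℕ)) ∈ rint (layered W) v φ) →
      (((x, s), (x, s)) : (U × ℕ) × (U × ℕ)) ∈ rint (layered W) v (φ.reach n)
  | 0, s, x, _, _, hxy, htop =>
      have hx := (hW.1 (by simp) _ _ hxy).1
      ⟨⟨loop_mem_layered hx s, rfl⟩, htop x hx⟩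
  | n + 1, s, x, y, hyx, hxy, htop => by
      have hyx' : (y, x) ∈ W := hW.2 (by simp) _ _ hxy
      have hx := (hW.1 (by simp) _ _ hxy).1
      refine mem_rint_reach_succ.2 ⟨loop_mem_layered hx s, (y, s + 1),
        ⟨hxy, fun h => absurd h.symm hyx, by dsimp only; omega, by dsimp only; omega⟩,
        ⟨hyx', fun h => absurd h hyx, by dsimp only; omega, by dsimp only; omega⟩, ?_⟩
      refine mem_rint_reach_of_forall_level hW n (s + 1) (Ne.symm hyx) hyx' fun u hu => ?_
      rw [Nat.add_right_comm]
      exact htop u hu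

theorem mem_rint_reach_deepIn_of_far (hW : IsHRel {RS.R, RS.S} W) {i : Fin m} {d : ℕ}
    (hfar : ∀ z : U × ℕ, (z, z) ∈ layered W → d < z.2 → (z, z) ∈ v i)
    {a b : U} (hab : a ≠ b) (h : (a, b) ∈ W) :
    (((b, 0), (b, 0)) : (U × ℕ) × (U × ℕ)) ∈
      rint (layered W) v ((deepIn i (2 * d + 1)).reach (3 * d + 2)) := by
  refine mem_rint_reach_of_forall_level hW _ 0 hab (hW.2 (by simp) _ _ h) fun u hu => ?_
  have hloop := loop_mem_layered hu (0 + (3 * d + 2))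
  refine ⟨⟨⟨hloop, rfl⟩, hfar _ hloop (by dsimp only; omega)⟩, hloop, fun hnear => ?_⟩
  obtain ⟨z, ⟨⟨hzW, -⟩, -, -, hz⟩, hlev, -⟩ := exists_loop_of_mem_rint_reach _ _ hnear
  exact hz (hfar z hzW (by dsimp only at hlev; omega))

theorem notMem_rint_reach_deepIn_of_near (hW : IsHRel {RS.R, RS.S} W) {i : Fin m} {d L : ℕ}
    (hnear : ∀ z : U × ℕ, (z, z) ∈ v i → z.2 ≤ d) {x : U × ℕ}
    (hx : ∃ y ≠ x.1, (x.1, y) ∈ W) :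
    (x, x) ∉ rint (layered W) v ((deepIn i (2 * d + 1)).reach L) := by
  intro h
  obtain ⟨⟨z, s⟩, ⟨-, ⟨-, hzi⟩, -, hfar⟩, -, hz⟩ := exists_loop_of_mem_rint_reach L x h
  obtain ⟨y, hyz, hzy⟩ := hz hx
  have hsd : s ≤ d := hnear _ hzi
  refine hfar (rint_reach_mono (show d + 1 - s ≤ 2 * d + 1 by omega) ?_)
  refine mem_rint_reach_of_forall_level hW (d + 1 - s) s hyz hzy fun u hu => ?_
  have hloop := loop_mem_layered hu (s + (d + 1 - s))
  exact ⟨⟨hloop, rfl⟩, hloop, fun hu' => by have := hnear _ hu'; dsimp only at this; omega⟩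

end Walks

section Painting

variable {U : Type*} {m : ℕ} {W : Set (U × U)} {v : Fin m → Set (U × U)} {i : Fin m}
  {Y : Set ((U × ℕ) × (U × ℕ))}

theorem update_layeredVal_subset (hY : Y ⊆ layered W) :
    ∀ j, update (layeredVal W v) i Y j ⊆ layered W := by
  intro j
  rcases eq_or_ne j i with rfl | hj
  · simpa using hY
  · rw [update_of_ne hj]
    exact Set.inter_subset_left

theorem mem_rint_layered_update (hv : ∀ i, v i ⊆ W) (hY : Y ⊆ layered W) {σ : RTerm m}
    (hlow : ∀ q, q.1.2 ≤ σ.depth → q.2.2 ≤ σ.depth → (q ∈ layeredVal W v i ↔ q ∈ Y))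
    {a b : U} (h : (a, b) ∈ rint W v σ) :
    (((a, 0), (b, 0)) : (U × ℕ) × (U × ℕ)) ∈ rint (layered W) (update (layeredVal W v) i Y) σ := by
  refine (mem_rint_layered_congr (v₁ := layeredVal W v) (D := σ.depth)
    (fun _ => Set.inter_subset_left) (update_layeredVal_subset hY) (fun j q h₁ h₂ => ?_)
    σ _ (by simp) (by simp)).1 ?_
  · rcases eq_or_ne j i with rfl | hj
    · simpa using hlow q h₁ h₂
    · simp [update_of_ne hj]
  · rw [rint_layered hv]
    exact ⟨⟨rint_subset hv σ h, fun _ => rfl, by simp, by simp⟩, h⟩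

end Painting

theorem IsAtomT.not_valid_mul_div {m : ℕ} (hm : 1 ≤ m) {σ : RTerm m}
    (hσ : IsAtomT {RS.R, RS.S} σ) : ¬ Valid {RS.R, RS.S} (σ.mul .div) σ := by
  intro hdiv
  obtain ⟨U, W, v, hW, hv, ⟨a, b⟩, hab⟩ := exists_mem_rint_of_not_valid_zero hσ.1
  have hbW := rint_subset hv σ hab
  have hne : a ≠ b := fun h =>
    ((hdiv U W v hW hv).symm ▸ hab : (a, b) ∈ rint W v (σ.mul .div)).2.2.2 ⟨hbW, h⟩
  set i : Fin m := ⟨0, hm⟩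
  set d := σ.depth
  set far : Set ((U × ℕ) × (U × ℕ)) := {q | q ∈ layered W ∧ q.1 = q.2 ∧ d < q.1.2}
  have hYA : layeredVal W v i ∪ far ⊆ layered W :=
    Set.union_subset Set.inter_subset_left fun q hq => hq.1
  have hYB : layeredVal W v i \ far ⊆ layered W := Set.sdiff_subset.trans Set.inter_subset_left
  have hσA := mem_rint_layered_update hv hYA
    (fun q h _ => (or_iff_left fun (hq : q ∈ far) => (not_lt.2 h) hq.2.2).symm) hab
  have hσB := mem_rint_layered_update hv hYB
    (fun q h _ => (and_iff_left fun (hq : q ∈ far) => (not_lt.2 h) hq.2.2).symm) hab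
  have hsep := hσ.mem_rint_iff (.comp .one ((deepIn i (2 * d + 1)).reach (3 * d + 2)))
    (isHRel_layered hW) (update_layeredVal_subset hYA) (update_layeredVal_subset hYB) hσA hσB
  rw [mem_rint_one_comp_reach, mem_rint_one_comp_reach] at hsep
  refine notMem_rint_reach_deepIn_of_near hW (fun z hz => ?_) ⟨a, hne, hW.2 (by simp) _ _ hbW⟩
    (hsep.1 ⟨rint_subset (update_layeredVal_subset hYA) σ hσA,
      mem_rint_reach_deepIn_of_far hW (fun z hz hdz => ?_) hne hbW⟩).2
  · simp only [update_self] at hz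
    exact not_lt.1 fun hdz => hz.2 ⟨hz.1.1, rfl, hdz⟩
  · simp only [update_self]
    exact Or.inr ⟨hz, rfl, hdz⟩

theorem not_valid_div_zero {m : ℕ} {H : Set RS} : ¬ Valid H (.div : RTerm m) .zero := by
  intro h
  have hW : IsHRel H (Set.univ : Set (Bool × Bool)) :=
    ⟨fun _ _ _ _ => ⟨trivial, trivial⟩, fun _ _ _ _ => trivial⟩
  have hdiv : (false, true) ∈ rint Set.univ (fun _ : Fin m => ∅) RTerm.div :=
    ⟨trivial, trivial, fun h => Bool.false_ne_true h.2⟩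
  exact (h Bool Set.univ _ hW fun _ => Set.empty_subset _).subset hdiv

/-- for `m ≥ 1`, the free weakly associative relation algebra
`Fr_m(RRA_{R,S})` is not atomic: some nonzero `[τ]` has no atom below it. -/
theorem stmt_10 (m : ℕ) (hm : 1 ≤ m) :
    ∃ τ : RTerm m, ¬ Valid {RS.R, RS.S} τ .zero ∧
      ∀ σ : RTerm m, IsAtomT {RS.R, RS.S} σ →
        ¬ Valid {RS.R, RS.S} (σ.mul τ) σ :=
  ⟨.div, not_valid_div_zero, fun _ hσ => hσ.not_valid_mul_div hm⟩
end
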